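/- arXiv:1907.04208 — 2 statements merged into one kernel-verified Lean document; each statement's English description precedes it below -/
import Mathlib

section
/- For every y in (Z/4Z)^2, the sum χ_y(L·L) := Σ_{a,b ∈ L} i^{y·(a+b)} equals 16 if y = (0,0); equals 0 if y ∈ {(0,2),(2,0),(2,2)}; equals 4 if y ∈ {(0,1),(0,3),(1,0),(3,0),(1,3),(3,1)}; and equals -4 if y ∈ {(1,1),(3,3),(1,2),(3,2),(2,1),(2,3)}. -/
open Finset

abbrev G4 : Type := ZMod 4 × ZMod 4

/-- The character `χ_y(x) = i^(y·x)` on `(ℤ/4ℤ)²`. -/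
noncomputable def chi (y x : G4) : ℂ := Complex.I ^ (y.1 * x.1 + y.2 * x.2).val

def L : Finset G4 := {(0,0),(0,1),(1,0),(3,3)}

def Zset : Finset G4 := {(0,2),(2,0),(2,2)}

def Pset : Finset G4 := {(0,1),(0,3),(1,0),(3,0),(1,3),(3,1)}

def Mset : Finset G4 := {(1,1),(3,3),(1,2),(3,2),(2,1),(2,3)}

lemma Ival : ∀ n : ZMod 4, Complex.I ^ n.val =
    if n = 0 then 1 else if n = 1 then Complex.I else if n = 2 then -1 else -Complex.I := by
  have hall : ∀ n : ZMod 4, n = 0 ∨ n = 1 ∨ n = 2 ∨ n = 3 := by decide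
  intro n; rcases hall n with h | h | h | h <;> subst h
  · rw [if_pos rfl, show ((0:ZMod 4)).val = 0 from rfl, pow_zero]
  · rw [if_neg (by decide), if_pos rfl, show ((1:ZMod 4)).val = 1 from rfl, pow_one]
  · rw [if_neg (by decide), if_neg (by decide), if_pos rfl,
      show ((2:ZMod 4)).val = 2 from rfl, sq, Complex.I_mul_I]
  · rw [if_neg (by decide), if_neg (by decide), if_neg (by decide),
      show ((3:ZMod 4)).val = 3 from rfl]
    norm_num [pow_succ, Complex.I_sq]


theorem stmt1 (y : G4) :
    (y = (0,0) → ∑ a ∈ L, ∑ b ∈ L, chi y (a + b) = 16) ∧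
    (y ∈ Zset → ∑ a ∈ L, ∑ b ∈ L, chi y (a + b) = 0) ∧
    (y ∈ Pset → ∑ a ∈ L, ∑ b ∈ L, chi y (a + b) = 4) ∧
    (y ∈ Mset → ∑ a ∈ L, ∑ b ∈ L, chi y (a + b) = -4) := by
  refine ⟨fun h => ?_, fun h => ?_, fun h => ?_, fun h => ?_⟩
  · subst h
    simp only [L, chi]
    simp +decide only [Finset.sum_insert, Finset.mem_insert, Finset.mem_singleton,
      Finset.sum_singleton, Prod.mk_add_mk, Ival, if_true, if_false]
    ring
  · simp only [Zset, Finset.mem_insert, Finset.mem_singleton] at h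
    rcases h with h | h | h <;> subst h <;>
      (simp only [L, chi];
       simp +decide only [Finset.sum_insert, Finset.mem_insert, Finset.mem_singleton,
         Finset.sum_singleton, Prod.mk_add_mk, Ival, if_true, if_false];
       ring)
  · simp only [Pset, Finset.mem_insert, Finset.mem_singleton] at h
    rcases h with h | h | h | h | h | h <;> subst h <;>
      (simp only [L, chi];
       simp +decide only [Finset.sum_insert, Finset.mem_insert, Finset.mem_singleton,
         Finset.sum_singleton, Prod.mk_add_mk, Ival, if_true, if_false];
       ring)
  · simp only [Mset, Finset.mem_insert, Finset.mem_singleton] at h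
    rcases h with h | h | h | h | h | h <;> subst h <;>
      (simp only [L, chi];
       simp +decide only [Finset.sum_insert, Finset.mem_insert, Finset.mem_singleton,
         Finset.sum_singleton, Prod.mk_add_mk, Ival, if_true, if_false];
       ring)
end

section
/- For T = L^m and T' = ({0}×T) ∪ ({1}×(−T)) ⊆ Z/2Z × (Z/4Z)^{2m}, the difference multiset of T' has the following spectrum: the value 0 occurs 2^{4m+1} − 10^m − 13^m times; for odd l with 1 ≤ l ≤ m+1, the value 2^l occurs 12^{m−(l−1)/2}·C(m,(l−1)/2) + 2^{2m−l+1}·3^{l−1}·C(m,l−1) times; for even l with 2 ≤ l ≤ m+1, the value 2^l occurs 2^{2m−l+1}·3^{l−1}·C(m,l−1) times; and for odd l with m+2 ≤ l ≤ 2m+1, the value 2^l occurs 12^{m−(l−1)/2}·C(m,(l−1)/2) times. -/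
open Finset

/-- `T = L^m ⊆ ((ℤ/4ℤ)²)^m`. -/
def Tm (m : ℕ) : Finset (Fin m → G4) := Fintype.piFinset fun _ => L

/-- `T' = ({0} × T) ∪ ({1} × (-T)) ⊆ ℤ/2ℤ × ((ℤ/4ℤ)²)^m`. -/
def T' (m : ℕ) : Finset (ZMod 2 × (Fin m → G4)) :=
  (({0} : Finset (ZMod 2)) ×ˢ Tm m) ∪
    (({1} : Finset (ZMod 2)) ×ˢ (Tm m).image fun t => -t)

/-- `ν_A(y)`, the number of pairs `(a,b) ∈ A × A` with `a - b = y`,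
i.e. the coefficient `[A A⁽⁻¹⁾]_y`. -/
def nu {G : Type*} [AddCommGroup G] [DecidableEq G] (A : Finset G) (y : G) : ℕ :=
  ((A ×ˢ A).filter fun p => p.1 - p.2 = y).card

/-!
Inside the coset `{0} × (ℤ/4ℤ)^{2m}` a difference of two elements of `T'` comes from two elements
of `T` or of `-T`, so `ν_{T'}(0, y) = 2 ν_T(y)`; inside `{1} × (ℤ/4ℤ)^{2m}` it comes from one of
each, so `ν_{T'}(1, y) = σ_T(y) + σ_T(-y)` with `σ_T(y) = #{a ∈ T | y - a ∈ T}`. Both `ν_T` and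
`σ_T` are products of the coordinate counts `ν_L`, `σ_L`, and `σ_L(-z) = σ_L(z)`. On `(ℤ/4ℤ)²`,
`ν_L` takes the values `4, 1` on `1, 12` points and `σ_L` the values `2, 1` on `6, 4` points
(zero elsewhere), so the number of `y` with `ν_T(y) = 4^k`, resp. `σ_T(y) = 2^k`, is the binomial
count `C(m, k) 1^k 12^(m-k)`, resp. `C(m, k) 6^k 4^(m-k)`.
-/

section DifferenceCount

variable {G : Type*} [AddCommGroup G] [DecidableEq G]

lemma nu_eq_card_filter (A : Finset G) (g : G) : nu A g = #{b ∈ A | b + g ∈ A} := by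
  refine card_nbij' Prod.snd (fun b => (b + g, b)) ?_ ?_ ?_ ?_
  · rintro ⟨a, b⟩ h
    simp only [coe_filter, mem_product, Set.mem_ofPred_eq] at h ⊢
    obtain ⟨⟨ha, hb⟩, rfl⟩ := h
    simpa using ⟨hb, ha⟩
  · intro b h
    simp only [coe_filter, mem_product, Set.mem_ofPred_eq] at h ⊢
    exact ⟨⟨h.2, h.1⟩, add_sub_cancel_left b g⟩
  · rintro ⟨a, b⟩ h
    simp only [coe_filter, mem_product, Set.mem_ofPred_eq] at h
    simp [← h.2]
  · intro b _
    rfl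

lemma nu_neg (A : Finset G) (g : G) : nu A (-g) = nu A g :=
  card_nbij' Prod.swap Prod.swap
    (fun p h => by simp_all [← neg_sub p.1 p.2])
    (fun p h => by simp_all [← neg_sub p.1 p.2])
    (fun _ _ => rfl) (fun _ _ => rfl)

def sumCount (A : Finset G) (y : G) : ℕ := #{a ∈ A | y - a ∈ A}

def signedDouble (A : Finset G) : Finset (ZMod 2 × G) :=
  ({0} ×ˢ A) ∪ ({1} ×ˢ A.image fun t => -t)

@[simp]
lemma mem_signedDouble_zero (A : Finset G) (x : G) :
    ((0 : ZMod 2), x) ∈ signedDouble A ↔ x ∈ A := by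
  simp [signedDouble]

@[simp]
lemma mem_signedDouble_one (A : Finset G) (x : G) :
    ((1 : ZMod 2), x) ∈ signedDouble A ↔ -x ∈ A := by
  simp [signedDouble, neg_eq_iff_eq_neg]

lemma card_filter_signedDouble (A : Finset G) (P : ZMod 2 × G → Prop) [DecidablePred P] :
    #{g ∈ signedDouble A | P g} = #{a ∈ A | P (0, a)} + #{a ∈ A | P (1, -a)} := by
  rw [signedDouble, filter_union, card_union_of_disjoint, singleton_product, singleton_product,
    filter_map, filter_map, card_map, card_map, filter_image,
    card_image_of_injective _ neg_injective]
  · rfl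
  · exact disjoint_filter_filter (by simp [disjoint_left])

lemma nu_signedDouble_zero (A : Finset G) (y : G) :
    nu (signedDouble A) (0, y) = 2 * nu A y := by
  rw [nu_eq_card_filter, card_filter_signedDouble, two_mul]
  congr 1
  · rw [nu_eq_card_filter]
    simp
  · rw [← nu_neg, nu_eq_card_filter]
    simp [add_comm]

lemma nu_signedDouble_one (A : Finset G) (y : G) :
    nu (signedDouble A) (1, y) = sumCount A (-y) + sumCount A y := by
  rw [nu_eq_card_filter, card_filter_signedDouble, sumCount, sumCount]
  have h : (1 : ZMod 2) + 1 = 0 := rfl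
  simp [h, sub_eq_add_neg, add_comm]

end DifferenceCount

section Pi

variable {ι : Type*} [Fintype ι] [DecidableEq ι]

lemma card_filter_piFinset_forall {α : ι → Type*} (s : ∀ i, Finset (α i))
    (p : ∀ i, α i → Prop) [∀ i, DecidablePred (p i)] :
    #{t ∈ Fintype.piFinset s | ∀ i, p i (t i)} = ∏ i, #{a ∈ s i | p i a} := by
  rw [← Fintype.card_piFinset]
  congr 1
  ext t
  simp [Fintype.mem_piFinset, forall_and]

variable {G : ι → Type*} [∀ i, AddCommGroup (G i)] [∀ i, DecidableEq (G i)]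

lemma nu_piFinset (s : ∀ i, Finset (G i)) (y : ∀ i, G i) :
    nu (Fintype.piFinset s) y = ∏ i, nu (s i) (y i) := by
  simp only [nu_eq_card_filter, Fintype.mem_piFinset, Pi.add_apply]
  exact card_filter_piFinset_forall s fun i a => a + y i ∈ s i

lemma sumCount_piFinset (s : ∀ i, Finset (G i)) (y : ∀ i, G i) :
    sumCount (Fintype.piFinset s) y = ∏ i, sumCount (s i) (y i) := by
  simp only [sumCount, Fintype.mem_piFinset, Pi.sub_apply]
  exact card_filter_piFinset_forall s fun i a => y i - a ∈ s i

end Pi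

lemma prod_eq_zero_or_eq_pow {ι α : Type*} {f : α → ℕ} {c : ℕ} (s : Finset ι)
    (hf : ∀ z, f z = 0 ∨ f z = 1 ∨ f z = c) (y : ι → α) :
    ∏ i ∈ s, f (y i) = 0 ∨ ∃ k, ∏ i ∈ s, f (y i) = c ^ k := by
  refine prod_induction _ (fun n => n = 0 ∨ ∃ k, n = c ^ k) ?_ (Or.inr ⟨0, rfl⟩) fun i _ => ?_
  · rintro _ _ (rfl | ⟨j, rfl⟩) (rfl | ⟨k, rfl⟩)
    iterate 3 exact Or.inl (by simp)
    exact Or.inr ⟨j + k, (pow_add c j k).symm⟩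
  · rcases hf (y i) with h | h | h
    · exact Or.inl h
    · exact Or.inr ⟨0, h⟩
    · exact Or.inr ⟨1, by rw [h, pow_one]⟩

section ProductCount

variable {α : Type*} [Fintype α] {f : α → ℕ} {c : ℕ}

lemma card_filter_prod_ne_zero {ι : Type*} [Fintype ι] [DecidableEq ι] :
    #{y : ι → α | ∏ i, f (y i) ≠ 0} = #{z | f z ≠ 0} ^ Fintype.card ι := by
  have h : ({y : ι → α | ∏ i, f (y i) ≠ 0} : Finset _) =
      Fintype.piFinset fun _ => {z | f z ≠ 0} := by
    ext y
    simp [Fintype.mem_piFinset, prod_ne_zero_iff]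
  rw [h, Fintype.card_piFinset, prod_const, card_univ]

lemma card_filter_prod_eq_zero {ι : Type*} [Fintype ι] [DecidableEq ι] :
    #{y : ι → α | ∏ i, f (y i) = 0} =
      Fintype.card α ^ Fintype.card ι - #{z | f z ≠ 0} ^ Fintype.card ι := by
  rw [← card_filter_prod_ne_zero, ← Fintype.card_fun, ← card_univ]
  exact Nat.eq_sub_of_add_eq (card_filter_add_card_filter_not _)

lemma card_filter_prod_succ (m v : ℕ) :
    #{y : Fin (m + 1) → α | ∏ i, f (y i) = v} =
      ∑ x, #{t : Fin m → α | f x * ∏ i, f (t i) = v} := by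
  rw [card_filter, ← (Fin.consEquiv fun _ => α).sum_comp, Fintype.sum_prod_type]
  refine sum_congr rfl fun x _ => ?_
  rw [card_filter]
  simp [Fin.prod_univ_succ, Fin.consEquiv]

lemma card_filter_mul_prod_eq_pow_succ (hc : 1 < c) (hf : ∀ z, f z = 0 ∨ f z = 1 ∨ f z = c)
    (m k : ℕ) (x : α) :
    #{t : Fin m → α | f x * ∏ i, f (t i) = c ^ (k + 1)} =
      (if f x = 1 then #{t : Fin m → α | ∏ i, f (t i) = c ^ (k + 1)} else 0) +
        if f x = c then #{t : Fin m → α | ∏ i, f (t i) = c ^ k} else 0 := by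
  have hc0 : 0 < c := zero_lt_one.trans hc
  rcases hf x with h | h | h <;> rw [h]
  · simp [(pow_pos hc0 _).ne, hc0.ne]
  · simp [hc.ne]
  · simp [hc.ne', pow_succ', Nat.mul_left_cancel_iff hc0]

theorem card_filter_prod_eq_pow (hc : 1 < c) (hf : ∀ z, f z = 0 ∨ f z = 1 ∨ f z = c) :
    ∀ m k, #{y : Fin m → α | ∏ i, f (y i) = c ^ k} =
      m.choose k * #{z | f z = c} ^ k * #{z | f z = 1} ^ (m - k)
  | 0, 0 => by simp
  | 0, k + 1 => by simp [(Nat.one_lt_pow k.succ_ne_zero hc).ne]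
  | m + 1, 0 => by
    have hx (x : α) : #{t : Fin m → α | f x * ∏ i, f (t i) = c ^ 0} =
        if f x = 1 then #{t : Fin m → α | ∏ i, f (t i) = c ^ 0} else 0 := by
      rcases hf x with h | h | h <;> simp [h, hc.ne']
    simp only [card_filter_prod_succ, hx, ← sum_filter, sum_const, smul_eq_mul,
      card_filter_prod_eq_pow hc hf m]
    simp [pow_succ']
  | m + 1, k + 1 => by
    simp only [card_filter_prod_succ, card_filter_mul_prod_eq_pow_succ hc hf, sum_add_distrib,
      ← sum_filter, sum_const, smul_eq_mul, card_filter_prod_eq_pow hc hf m,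
      Nat.choose_succ_succ', Nat.add_sub_add_right]
    rcases lt_or_ge m (k + 1) with h | h
    · simp [Nat.choose_eq_zero_of_lt h]
      ring
    · obtain ⟨d, rfl⟩ := Nat.exists_eq_add_of_le h
      rw [show k + 1 + d - k = d + 1 by omega, Nat.add_sub_cancel_left]
      ring

end ProductCount

lemma nu_L_cases : ∀ z, nu L z = 0 ∨ nu L z = 1 ∨ nu L z = 4 := by decide
lemma sumCount_L_cases : ∀ z, sumCount L z = 0 ∨ sumCount L z = 1 ∨ sumCount L z = 2 := by decide
lemma sumCount_L_neg : ∀ z, sumCount L (-z) = sumCount L z := by decide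
lemma card_nu_L_eq_four : #{z | nu L z = 4} = 1 := by decide
lemma card_nu_L_eq_one : #{z | nu L z = 1} = 12 := by decide
lemma card_nu_L_ne_zero : #{z | nu L z ≠ 0} = 13 := by decide
lemma card_sumCount_L_eq_two : #{z | sumCount L z = 2} = 6 := by decide
lemma card_sumCount_L_eq_one : #{z | sumCount L z = 1} = 4 := by decide
lemma card_sumCount_L_ne_zero : #{z | sumCount L z ≠ 0} = 10 := by decide

lemma T'_eq_signedDouble (m : ℕ) : T' m = signedDouble (Tm m) := rfl

lemma nu_T'_zero (m : ℕ) (y : Fin m → G4) : nu (T' m) (0, y) = 2 * ∏ i, nu L (y i) := by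
  rw [T'_eq_signedDouble, nu_signedDouble_zero, Tm, nu_piFinset]

lemma nu_T'_one (m : ℕ) (y : Fin m → G4) : nu (T' m) (1, y) = 2 * ∏ i, sumCount L (y i) := by
  simp only [T'_eq_signedDouble, nu_signedDouble_one, Tm, sumCount_piFinset, Pi.neg_apply,
    sumCount_L_neg, two_mul]

lemma card_filter_zmod_two_prod {H : Type*} [Fintype H] (P : ZMod 2 × H → Prop)
    [DecidablePred P] :
    #{g | P g} = #{y | P (0, y)} + #{y | P (1, y)} := by
  simp only [card_filter, Fintype.sum_prod_type]
  exact Fin.sum_univ_two _ -- `ZMod 2` is `Fin 2` by definition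

lemma card_nu_T'_eq_two_mul (m v : ℕ) :
    #{g | nu (T' m) g = 2 * v} =
      #{y : Fin m → G4 | ∏ i, nu L (y i) = v} + #{y : Fin m → G4 | ∏ i, sumCount L (y i) = v} := by
  simp only [card_filter_zmod_two_prod, nu_T'_zero, nu_T'_one, Nat.mul_left_cancel_iff two_pos]

lemma card_nu_T'_eq_zero (m : ℕ) :
    #{g | nu (T' m) g = 0} = 2 ^ (4 * m + 1) - 10 ^ m - 13 ^ m := by
  have h := card_nu_T'_eq_two_mul m 0
  rw [mul_zero] at h
  rw [h, card_filter_prod_eq_zero, card_filter_prod_eq_zero, card_nu_L_ne_zero,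
    card_sumCount_L_ne_zero, Fintype.card_fin, show Fintype.card G4 = 16 from rfl,
    pow_succ, pow_mul, show 2 ^ 4 = 16 from rfl]
  have h13 := Nat.pow_le_pow_left (show 13 ≤ 16 by norm_num) m
  have h10 := Nat.pow_le_pow_left (show 10 ≤ 16 by norm_num) m
  omega

lemma card_prod_nu_L_eq_four_pow (m k : ℕ) :
    #{y : Fin m → G4 | ∏ i, nu L (y i) = 4 ^ k} = 12 ^ (m - k) * m.choose k := by
  rw [card_filter_prod_eq_pow (by norm_num) nu_L_cases, card_nu_L_eq_four, card_nu_L_eq_one]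
  ring

lemma card_prod_nu_L_eq_two_pow_of_odd (m : ℕ) {j : ℕ} (hj : Odd j) :
    #{y : Fin m → G4 | ∏ i, nu L (y i) = 2 ^ j} = 0 := by
  refine card_eq_zero.mpr (filter_eq_empty_iff.mpr fun y _ h => ?_)
  rcases prod_eq_zero_or_eq_pow univ nu_L_cases y with h0 | ⟨k, hk⟩
  · exact pow_ne_zero j two_ne_zero (h0 ▸ h).symm
  · rw [hk, show 4 = 2 ^ 2 from rfl, ← pow_mul] at h
    exact Nat.not_even_iff_odd.mpr hj ⟨k, by rw [← Nat.pow_right_injective le_rfl h]; ring⟩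

lemma card_prod_sumCount_L_eq_two_pow (m j : ℕ) :
    #{y : Fin m → G4 | ∏ i, sumCount L (y i) = 2 ^ j} = 2 ^ (2 * m - j) * 3 ^ j * m.choose j := by
  rw [card_filter_prod_eq_pow one_lt_two sumCount_L_cases, card_sumCount_L_eq_two,
    card_sumCount_L_eq_one]
  rcases lt_or_ge m j with h | h
  · simp [Nat.choose_eq_zero_of_lt h]
  · obtain ⟨d, rfl⟩ := Nat.exists_eq_add_of_le h
    rw [show 2 * (j + d) - j = j + 2 * d by omega, Nat.add_sub_cancel_left,
      show 6 = 2 * 3 from rfl, show 4 = 2 ^ 2 from rfl, mul_pow, ← pow_mul]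
    ring

lemma card_nu_T'_eq_two_pow (m : ℕ) {l : ℕ} (hl : 1 ≤ l) :
    #{g | nu (T' m) g = 2 ^ l} =
      (if Odd l then 12 ^ (m - (l - 1) / 2) * m.choose ((l - 1) / 2) else 0) +
        2 ^ (2 * m + 1 - l) * 3 ^ (l - 1) * m.choose (l - 1) := by
  obtain ⟨j, rfl⟩ : ∃ j, l = j + 1 := ⟨l - 1, by omega⟩
  rw [pow_succ', card_nu_T'_eq_two_mul, card_prod_sumCount_L_eq_two_pow, Nat.add_sub_cancel,
    show 2 * m + 1 - (j + 1) = 2 * m - j by omega]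
  congr 1
  split_ifs with hj
  · obtain ⟨k, rfl⟩ : Even j := by simpa [Nat.odd_add_one] using hj
    rw [← two_mul, Nat.mul_div_cancel_left k two_pos, pow_mul]
    exact card_prod_nu_L_eq_four_pow m k
  · exact card_prod_nu_L_eq_two_pow_of_odd m (by simpa [Nat.odd_add_one] using hj)

theorem stmt18_general (m : ℕ) :
    ((univ.filter fun g => nu (T' m) g = 0).card = 2 ^ (4 * m + 1) - 10 ^ m - 13 ^ m) ∧
    (∀ l, Odd l → 1 ≤ l → l ≤ m + 1 →
      (univ.filter fun g => nu (T' m) g = 2 ^ l).card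
        = 12 ^ (m - (l - 1) / 2) * m.choose ((l - 1) / 2)
            + 2 ^ (2 * m + 1 - l) * 3 ^ (l - 1) * m.choose (l - 1)) ∧
    (∀ l, Even l → 2 ≤ l → l ≤ m + 1 →
      (univ.filter fun g => nu (T' m) g = 2 ^ l).card
        = 2 ^ (2 * m + 1 - l) * 3 ^ (l - 1) * m.choose (l - 1)) ∧
    (∀ l, Odd l → m + 2 ≤ l → l ≤ 2 * m + 1 →
      (univ.filter fun g => nu (T' m) g = 2 ^ l).card
        = 12 ^ (m - (l - 1) / 2) * m.choose ((l - 1) / 2)) := by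
  refine ⟨card_nu_T'_eq_zero m, fun l hodd hl _ => ?_, fun l heven hl _ => ?_,
    fun l hodd hl _ => ?_⟩
  · rw [card_nu_T'_eq_two_pow m hl, if_pos hodd]
  · rw [card_nu_T'_eq_two_pow m (by omega), if_neg (Nat.not_odd_iff_even.mpr heven), zero_add]
  · rw [card_nu_T'_eq_two_pow m (by omega), if_pos hodd,
      Nat.choose_eq_zero_of_lt (show m < l - 1 by omega), mul_zero, add_zero]

/-- The difference spectrum of `T'`. -/
theorem stmt18 (m : ℕ) (hm : 1 ≤ m) :
    ((univ.filter fun g => nu (T' m) g = 0).card = 2 ^ (4 * m + 1) - 10 ^ m - 13 ^ m) ∧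
    (∀ l, Odd l → 1 ≤ l → l ≤ m + 1 →
      (univ.filter fun g => nu (T' m) g = 2 ^ l).card
        = 12 ^ (m - (l - 1) / 2) * m.choose ((l - 1) / 2)
            + 2 ^ (2 * m + 1 - l) * 3 ^ (l - 1) * m.choose (l - 1)) ∧
    (∀ l, Even l → 2 ≤ l → l ≤ m + 1 →
      (univ.filter fun g => nu (T' m) g = 2 ^ l).card
        = 2 ^ (2 * m + 1 - l) * 3 ^ (l - 1) * m.choose (l - 1)) ∧
    (∀ l, Odd l → m + 2 ≤ l → l ≤ 2 * m + 1 →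
      (univ.filter fun g => nu (T' m) g = 2 ^ l).card
        = 12 ^ (m - (l - 1) / 2) * m.choose ((l - 1) / 2)) :=
  stmt18_general m
end
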